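/- arXiv:1909.12882 — 3 statements merged into one kernel-verified Lean document; each statement's English description precedes it below -/
import Mathlib

section
/- The 7×7 integer matrix M₀ = [[1,2,-2,-2,2,-1,-2],[-2,-3,6,2,-4,3,6],[2,6,-3,-2,6,-3,-4],[-2,-2,2,1,-2,1,2],[0,0,-4,0,1,-2,-4],[-4,-4,4,4,-4,1,4],[0,-4,0,0,-4,2,1]] satisfies M₀ᵀ Q M₀ = Q, where Q = [[0,0,0,2,0,0,0],[0,0,-2,0,0,0,0],[0,-2,0,0,0,0,0],[2,0,0,0,0,0,0],[0,0,0,0,-1,1,2],[0,0,0,0,1,-1/2,-1],[0,0,0,0,2,-1,-1]]. -/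
set_option maxHeartbeats 1000000



section Aux
variable {α : Type*} (a b c d e f g : α)

private lemma v7_0 : Matrix.vecCons a ![b,c,d,e,f,g] (0 : Fin 7) = a := rfl
private lemma v7_1 : Matrix.vecCons a ![b,c,d,e,f,g] (1 : Fin 7) = b := rfl
private lemma v7_2 : Matrix.vecCons a ![b,c,d,e,f,g] (2 : Fin 7) = c := rfl
private lemma v7_3 : Matrix.vecCons a ![b,c,d,e,f,g] (3 : Fin 7) = d := rfl
private lemma v7_4 : Matrix.vecCons a ![b,c,d,e,f,g] (4 : Fin 7) = e := rfl
private lemma v7_5 : Matrix.vecCons a ![b,c,d,e,f,g] (5 : Fin 7) = f := rfl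
private lemma v7_6 : Matrix.vecCons a ![b,c,d,e,f,g] (6 : Fin 7) = g := rfl
private lemma m7_0 (h : 0 < 7) : Matrix.vecCons a ![b,c,d,e,f,g] ⟨0, h⟩ = a := rfl
private lemma m7_1 (h : 1 < 7) : Matrix.vecCons a ![b,c,d,e,f,g] ⟨1, h⟩ = b := rfl
private lemma m7_2 (h : 2 < 7) : Matrix.vecCons a ![b,c,d,e,f,g] ⟨2, h⟩ = c := rfl
private lemma m7_3 (h : 3 < 7) : Matrix.vecCons a ![b,c,d,e,f,g] ⟨3, h⟩ = d := rfl
private lemma m7_4 (h : 4 < 7) : Matrix.vecCons a ![b,c,d,e,f,g] ⟨4, h⟩ = e := rfl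
private lemma m7_5 (h : 5 < 7) : Matrix.vecCons a ![b,c,d,e,f,g] ⟨5, h⟩ = f := rfl
private lemma m7_6 (h : 6 < 7) : Matrix.vecCons a ![b,c,d,e,f,g] ⟨6, h⟩ = g := rfl

end Aux

theorem stmt7 :
    (!![1, 2, -2, -2, 2, -1, -2;
    -2, -3, 6, 2, -4, 3, 6;
    2, 6, -3, -2, 6, -3, -4;
    -2, -2, 2, 1, -2, 1, 2;
    0, 0, -4, 0, 1, -2, -4;
    -4, -4, 4, 4, -4, 1, 4;
    0, -4, 0, 0, -4, 2, 1] : Matrix (Fin 7) (Fin 7) ℚ).transpose *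
      (!![0, 0, 0, 2, 0, 0, 0;
    0, 0, -2, 0, 0, 0, 0;
    0, -2, 0, 0, 0, 0, 0;
    2, 0, 0, 0, 0, 0, 0;
    0, 0, 0, 0, -1, 1, 2;
    0, 0, 0, 0, 1, -(1/2), -1;
    0, 0, 0, 0, 2, -1, -1] : Matrix (Fin 7) (Fin 7) ℚ) *
      (!![1, 2, -2, -2, 2, -1, -2;
    -2, -3, 6, 2, -4, 3, 6;
    2, 6, -3, -2, 6, -3, -4;
    -2, -2, 2, 1, -2, 1, 2;
    0, 0, -4, 0, 1, -2, -4;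
    -4, -4, 4, 4, -4, 1, 4;
    0, -4, 0, 0, -4, 2, 1] : Matrix (Fin 7) (Fin 7) ℚ) =
      (!![0, 0, 0, 2, 0, 0, 0;
    0, 0, -2, 0, 0, 0, 0;
    0, -2, 0, 0, 0, 0, 0;
    2, 0, 0, 0, 0, 0, 0;
    0, 0, 0, 0, -1, 1, 2;
    0, 0, 0, 0, 1, -(1/2), -1;
    0, 0, 0, 0, 2, -1, -1] : Matrix (Fin 7) (Fin 7) ℚ) := by
  ext i j
  fin_cases i <;> fin_cases j <;>
    · simp only [Matrix.mul_apply, Matrix.transpose_apply, Fin.sum_univ_seven, Matrix.of_apply,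
        v7_0, v7_1, v7_2, v7_3, v7_4, v7_5, v7_6,
        m7_0, m7_1, m7_2, m7_3, m7_4, m7_5, m7_6]
      norm_num
end

section
/- Let M_∞ = [[0,-4,1,0,-4,2,2],[4,0,4,1,-2,2,4],[-1,4,-3,-2,6,-3,-4],[0,-1,2,1,-2,1,2],[-4,0,-4,0,1,-2,-4],[0,0,4,4,-4,1,4],[0,-4,0,0,-4,2,1]]. Then M_∞³ is unipotent, i.e., (M_∞³ - I)⁷ = 0, while M_∞ itself is not unipotent, i.e., (M_∞ - I)⁷ ≠ 0. -/
def AZstmt10 : Matrix (Fin 7) (Fin 7) ℤ := !![0, -4, 1, 0, -4, 2, 2;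
    4, 0, 4, 1, -2, 2, 4;
    -1, 4, -3, -2, 6, -3, -4;
    0, -1, 2, 1, -2, 1, 2;
    -4, 0, -4, 0, 1, -2, -4;
    0, 0, 4, 4, -4, 1, 4;
    0, -4, 0, 0, -4, 2, 1]

lemma AZstmt10_unip : (AZstmt10 ^ 3 - 1) ^ 7 = 0 := by decide

lemma AZstmt10_ne : (AZstmt10 - 1) ^ 7 ≠ 0 := by decide

lemma MQ_eq : (!![0, -4, 1, 0, -4, 2, 2;
    4, 0, 4, 1, -2, 2, 4;
    -1, 4, -3, -2, 6, -3, -4;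
    0, -1, 2, 1, -2, 1, 2;
    -4, 0, -4, 0, 1, -2, -4;
    0, 0, 4, 4, -4, 1, 4;
    0, -4, 0, 0, -4, 2, 1] : Matrix (Fin 7) (Fin 7) ℚ) =
    (Int.castRingHom ℚ).mapMatrix AZstmt10 := by decide

theorem stmt10 :
    ((!![0, -4, 1, 0, -4, 2, 2;
    4, 0, 4, 1, -2, 2, 4;
    -1, 4, -3, -2, 6, -3, -4;
    0, -1, 2, 1, -2, 1, 2;
    -4, 0, -4, 0, 1, -2, -4;
    0, 0, 4, 4, -4, 1, 4;
    0, -4, 0, 0, -4, 2, 1] : Matrix (Fin 7) (Fin 7) ℚ) ^ 3 - 1) ^ 7 = 0 ∧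
    ((!![0, -4, 1, 0, -4, 2, 2;
    4, 0, 4, 1, -2, 2, 4;
    -1, 4, -3, -2, 6, -3, -4;
    0, -1, 2, 1, -2, 1, 2;
    -4, 0, -4, 0, 1, -2, -4;
    0, 0, 4, 4, -4, 1, 4;
    0, -4, 0, 0, -4, 2, 1] : Matrix (Fin 7) (Fin 7) ℚ) - 1) ^ 7 ≠ 0 := by
  have hinj : Function.Injective
      ((Int.castRingHom ℚ).mapMatrix : Matrix (Fin 7) (Fin 7) ℤ →+* Matrix (Fin 7) (Fin 7) ℚ) :=
    Matrix.map_injective Int.cast_injective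
  rw [MQ_eq]
  constructor
  · rw [← map_one ((Int.castRingHom ℚ).mapMatrix), ← map_pow, ← map_sub, ← map_pow,
      AZstmt10_unip, map_zero]
  · intro h
    rw [← map_one ((Int.castRingHom ℚ).mapMatrix), ← map_sub, ← map_pow,
      ← map_zero ((Int.castRingHom ℚ).mapMatrix)] at h
    exact AZstmt10_ne (hinj h)
end

section
/- With N₊, N₋, N_∞ as above, define Y₁=[N₋,N₊], Y₂=[N₋,N_∞], Y₃=[N₊,N_∞], Y₄=[Y₁,Y₂], Y₅=[Y₁,Y₃], Y₆=[Y₂,Y₃], Y₇=[Y₂,Y₆], Y₈=[Y₅,Y₆], Y₉=[N_∞,Y₅], Y₁₀=[N_∞,Y₉], Y₁₁=[N_∞,Y₁₀], Y₁₂=[N₊,Y₁₁], Y₁₃=[N_∞,Y₁₂], Y₁₄=[N₋,Y₁₃]. Then the 14 matrices N₋, N₊, Y₁, Y₄, Y₅, Y₆, Y₇, Y₈, Y₉, Y₁₀, Y₁₁, Y₁₂, Y₁₃, Y₁₄ are linearly independent over ℚ. -/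
noncomputable section

def Mplus : Matrix (Fin 7) (Fin 7) ℚ :=
  !![1, 0, 1, 0, 0, 0, 0;
    0, 1, 0, 1, 0, 0, 0;
    0, 0, 1, 0, 0, 0, 0;
    0, 0, 0, 1, 0, 0, 0;
    0, 0, 0, 0, 1, 0, 0;
    0, 0, 0, 0, 0, 1, 0;
    0, 0, 0, 0, 0, 0, 1]

def Mminus : Matrix (Fin 7) (Fin 7) ℚ :=
  !![1, 0, 0, 0, 0, 0, 0;
    0, 1, 0, 0, 0, 0, 0;
    -1, 0, 1, 0, 0, 0, 0;
    0, -1, 0, 1, 0, 0, 0;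
    0, 0, 0, 0, 1, 0, 0;
    0, 0, 0, 0, 0, 1, 0;
    0, 0, 0, 0, 0, 0, 1]

def Minfty : Matrix (Fin 7) (Fin 7) ℚ :=
  !![0, -4, 1, 0, -4, 2, 2;
    4, 0, 4, 1, -2, 2, 4;
    -1, 4, -3, -2, 6, -3, -4;
    0, -1, 2, 1, -2, 1, 2;
    -4, 0, -4, 0, 1, -2, -4;
    0, 0, 4, 4, -4, 1, 4;
    0, -4, 0, 0, -4, 2, 1]

def Nplus : Matrix (Fin 7) (Fin 7) ℚ := Mplus - 1

def Nminus : Matrix (Fin 7) (Fin 7) ℚ := Mminus - 1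

/-- The logarithm of the unipotent matrix `Minfty ^ 3`, as a finite sum. -/
def Ninfty : Matrix (Fin 7) (Fin 7) ℚ :=
  (1 / 3 : ℚ) • ∑ k ∈ Finset.Icc (1 : ℕ) 6, ((-1 : ℚ) ^ (k + 1) / (k : ℚ)) • (Minfty ^ 3 - 1) ^ k

def Y1 : Matrix (Fin 7) (Fin 7) ℚ := ⁅Nminus, Nplus⁆
def Y2 : Matrix (Fin 7) (Fin 7) ℚ := ⁅Nminus, Ninfty⁆
def Y3 : Matrix (Fin 7) (Fin 7) ℚ := ⁅Nplus, Ninfty⁆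
def Y4 : Matrix (Fin 7) (Fin 7) ℚ := ⁅Y1, Y2⁆
def Y5 : Matrix (Fin 7) (Fin 7) ℚ := ⁅Y1, Y3⁆
def Y6 : Matrix (Fin 7) (Fin 7) ℚ := ⁅Y2, Y3⁆
def Y7 : Matrix (Fin 7) (Fin 7) ℚ := ⁅Y2, Y6⁆
def Y8 : Matrix (Fin 7) (Fin 7) ℚ := ⁅Y5, Y6⁆
def Y9 : Matrix (Fin 7) (Fin 7) ℚ := ⁅Ninfty, Y5⁆
def Y10 : Matrix (Fin 7) (Fin 7) ℚ := ⁅Ninfty, Y9⁆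
def Y11 : Matrix (Fin 7) (Fin 7) ℚ := ⁅Ninfty, Y10⁆
def Y12 : Matrix (Fin 7) (Fin 7) ℚ := ⁅Nplus, Y11⁆
def Y13 : Matrix (Fin 7) (Fin 7) ℚ := ⁅Ninfty, Y12⁆
def Y14 : Matrix (Fin 7) (Fin 7) ℚ := ⁅Nminus, Y13⁆


def fQ : Matrix (Fin 7) (Fin 7) ℤ →+* Matrix (Fin 7) (Fin 7) ℚ := (Int.castRingHom ℚ).mapMatrix

def fQ14 : Matrix (Fin 14) (Fin 14) ℤ →+* Matrix (Fin 14) (Fin 14) ℚ := (Int.castRingHom ℚ).mapMatrix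

def ZmL : Matrix (Fin 7) (Fin 7) ℤ :=
  !![0, 0, 0, 0, 0, 0, 0;
    0, 0, 0, 0, 0, 0, 0;
    -1, 0, 0, 0, 0, 0, 0;
    0, -1, 0, 0, 0, 0, 0;
    0, 0, 0, 0, 0, 0, 0;
    0, 0, 0, 0, 0, 0, 0;
    0, 0, 0, 0, 0, 0, 0]

def ZpL : Matrix (Fin 7) (Fin 7) ℤ :=
  !![0, 0, 1, 0, 0, 0, 0;
    0, 0, 0, 1, 0, 0, 0;
    0, 0, 0, 0, 0, 0, 0;
    0, 0, 0, 0, 0, 0, 0;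
    0, 0, 0, 0, 0, 0, 0;
    0, 0, 0, 0, 0, 0, 0;
    0, 0, 0, 0, 0, 0, 0]

def MiL : Matrix (Fin 7) (Fin 7) ℤ :=
  !![0, -4, 1, 0, -4, 2, 2;
    4, 0, 4, 1, -2, 2, 4;
    -1, 4, -3, -2, 6, -3, -4;
    0, -1, 2, 1, -2, 1, 2;
    -4, 0, -4, 0, 1, -2, -4;
    0, 0, 4, 4, -4, 1, 4;
    0, -4, 0, 0, -4, 2, 1]

def U1L : Matrix (Fin 7) (Fin 7) ℤ :=
  !![2, -2, 8, 0, -4, 4, 8;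
    2, -34, 32, 8, -44, 24, 40;
    -8, 32, -30, -2, 40, -24, -36;
    0, -8, 2, -2, -8, 4, 4;
    0, 16, -24, -8, 24, -14, -28;
    0, -48, 16, 0, -52, 24, 28;
    8, -8, 16, 0, -12, 10, 16]

def U2L : Matrix (Fin 7) (Fin 7) ℤ :=
  !![0, 0, 0, 0, 0, 0, 0;
    0, -64, 64, 0, -80, 48, 80;
    0, 64, -64, 0, 80, -48, -80;
    0, 0, 0, 0, 0, 0, 0;
    0, 32, -32, 0, 40, -24, -40;
    0, -64, 64, 0, -80, 48, 80;
    0, -32, 32, 0, -40, 24, 40]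

def U3L : Matrix (Fin 7) (Fin 7) ℤ :=
  !![0, 0, 0, 0, 0, 0, 0;
    0, 0, 0, 0, 0, 0, 0;
    0, 0, 0, 0, 0, 0, 0;
    0, 0, 0, 0, 0, 0, 0;
    0, 0, 0, 0, 0, 0, 0;
    0, 0, 0, 0, 0, 0, 0;
    0, 0, 0, 0, 0, 0, 0]

def U4L : Matrix (Fin 7) (Fin 7) ℤ :=
  !![0, 0, 0, 0, 0, 0, 0;
    0, 0, 0, 0, 0, 0, 0;
    0, 0, 0, 0, 0, 0, 0;
    0, 0, 0, 0, 0, 0, 0;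
    0, 0, 0, 0, 0, 0, 0;
    0, 0, 0, 0, 0, 0, 0;
    0, 0, 0, 0, 0, 0, 0]

def U5L : Matrix (Fin 7) (Fin 7) ℤ :=
  !![0, 0, 0, 0, 0, 0, 0;
    0, 0, 0, 0, 0, 0, 0;
    0, 0, 0, 0, 0, 0, 0;
    0, 0, 0, 0, 0, 0, 0;
    0, 0, 0, 0, 0, 0, 0;
    0, 0, 0, 0, 0, 0, 0;
    0, 0, 0, 0, 0, 0, 0]

def U6L : Matrix (Fin 7) (Fin 7) ℤ :=
  !![0, 0, 0, 0, 0, 0, 0;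
    0, 0, 0, 0, 0, 0, 0;
    0, 0, 0, 0, 0, 0, 0;
    0, 0, 0, 0, 0, 0, 0;
    0, 0, 0, 0, 0, 0, 0;
    0, 0, 0, 0, 0, 0, 0;
    0, 0, 0, 0, 0, 0, 0]

def WL : Matrix (Fin 7) (Fin 7) ℤ :=
  !![120, -120, 480, 0, -240, 240, 480;
    120, -120, 0, 480, -240, 0, 0;
    -480, 0, 120, -120, 0, 0, 240;
    0, -480, 120, -120, -480, 240, 240;
    0, 0, -480, -480, 240, -120, -480;
    0, -960, -960, 0, -720, 0, -720;
    480, 480, 0, 0, 480, -120, -240]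

def Z1L : Matrix (Fin 7) (Fin 7) ℤ :=
  !![1, 0, 0, 0, 0, 0, 0;
    0, 1, 0, 0, 0, 0, 0;
    0, 0, -1, 0, 0, 0, 0;
    0, 0, 0, -1, 0, 0, 0;
    0, 0, 0, 0, 0, 0, 0;
    0, 0, 0, 0, 0, 0, 0;
    0, 0, 0, 0, 0, 0, 0]

def Z2L : Matrix (Fin 7) (Fin 7) ℤ :=
  !![480, 0, 0, 0, 0, 0, 0;
    0, 480, 0, 0, 0, 0, 0;
    0, 0, -480, 0, 240, -240, -480;
    0, 0, 0, -480, 240, 0, 0;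
    -480, -480, 0, 0, 0, 0, 0;
    -960, 0, 0, 0, 0, 0, 0;
    0, 0, 0, 0, 0, 0, 0]

def Z3L : Matrix (Fin 7) (Fin 7) ℤ :=
  !![-480, 0, 0, 0, 0, 0, 240;
    0, -480, 0, 0, -480, 240, 240;
    0, 0, 480, 0, 0, 0, 0;
    0, 0, 0, 480, 0, 0, 0;
    0, 0, 0, 0, 0, 0, 0;
    0, 0, 0, 960, 0, 0, 0;
    0, 0, -480, -480, 0, 0, 0]

def Z4L : Matrix (Fin 7) (Fin 7) ℤ :=
  !![0, 0, 0, 0, 0, 0, 0;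
    0, 0, 0, 0, 0, 0, 0;
    0, 0, 0, 0, -240, 240, 480;
    0, 0, 0, 0, -240, 0, 0;
    480, 480, 0, 0, 0, 0, 0;
    960, 0, 0, 0, 0, 0, 0;
    0, 0, 0, 0, 0, 0, 0]

def Z5L : Matrix (Fin 7) (Fin 7) ℤ :=
  !![0, 0, 0, 0, 0, 0, 240;
    0, 0, 0, 0, -480, 240, 240;
    0, 0, 0, 0, 0, 0, 0;
    0, 0, 0, 0, 0, 0, 0;
    0, 0, 0, 0, 0, 0, 0;
    0, 0, 0, 960, 0, 0, 0;
    0, 0, -480, -480, 0, 0, 0]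

def Z6L : Matrix (Fin 7) (Fin 7) ℤ :=
  !![0, 0, 0, 0, 0, 0, 115200;
    0, -230400, 0, 0, -230400, 115200, 115200;
    0, 0, 230400, 0, -115200, 115200, 230400;
    0, 0, 0, 0, -115200, 0, 0;
    230400, 230400, 0, 0, 230400, -115200, -230400;
    460800, 0, 0, 460800, -230400, 0, -230400;
    0, 0, -230400, -230400, 230400, -115200, -230400]

def Z7L : Matrix (Fin 7) (Fin 7) ℤ :=
  !![0, 0, 0, 0, 0, 0, 55296000;
    0, -110592000, 0, 0, -110592000, 55296000, 55296000;
    0, 0, 110592000, 0, 0, 27648000, 110592000;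
    0, 0, 0, 0, 110592000, -27648000, -55296000;
    -110592000, 110592000, 0, 0, 110592000, -55296000, -110592000;
    -331776000, -110592000, 0, 221184000, -110592000, 0, -110592000;
    0, 110592000, -110592000, -110592000, 110592000, -55296000, -110592000]

def Z8L : Matrix (Fin 7) (Fin 7) ℤ :=
  !![0, 0, 0, 0, 55296000, -27648000, -55296000;
    0, -110592000, 0, 0, -221184000, 82944000, 55296000;
    0, 0, 110592000, 0, 0, 0, 0;
    0, 0, 0, 0, 0, 0, 0;
    0, 0, -110592000, 0, 110592000, -55296000, -110592000;
    0, 0, -110592000, -110592000, -110592000, 0, -110592000;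
    0, 0, -221184000, 0, 110592000, -55296000, -110592000]

def Z9L : Matrix (Fin 7) (Fin 7) ℤ :=
  !![-115200, -115200, -230400, 0, -57600, 0, 57600;
    -115200, 115200, 0, -230400, 230400, -57600, 0;
    0, 0, -115200, -115200, 0, 0, -115200;
    0, 0, -115200, 115200, 230400, -115200, -115200;
    0, 0, 230400, 115200, 0, 0, 0;
    0, 460800, 230400, 460800, 921600, -460800, -460800;
    -230400, -230400, 230400, -115200, -460800, 230400, 460800]

def Z10L : Matrix (Fin 7) (Fin 7) ℤ :=
  !![-221184000, -82944000, 82944000, 0, -103680000, 34560000, 158976000;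
    0, -193536000, 0, 82944000, -131328000, 62208000, 131328000;
    0, 0, 193536000, -82944000, -110592000, 82944000, 110592000;
    0, 0, 0, 221184000, -55296000, -27648000, 0;
    221184000, 110592000, -13824000, 69120000, 55296000, -27648000, -138240000;
    552960000, 110592000, -304128000, 635904000, 110592000, -165888000, -387072000;
    -110592000, -110592000, 13824000, -179712000, -27648000, 55296000, 110592000]

def Z11L : Matrix (Fin 7) (Fin 7) ℤ :=
  !![0, -119439360000, 119439360000, 0, -149299200000, 89579520000, 149299200000;
    -119439360000, 0, 0, 119439360000, -29859840000, -29859840000, 29859840000;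
    119439360000, 0, 0, -119439360000, 29859840000, 29859840000, -29859840000;
    0, 119439360000, -119439360000, 0, 149299200000, -89579520000, -149299200000;
    59719680000, 179159040000, -179159040000, -59719680000, 238878720000, -119439360000, -238878720000;
    -119439360000, 597196800000, -597196800000, 119439360000, 716636160000, -477757440000, -716636160000;
    -59719680000, -179159040000, 179159040000, 59719680000, -238878720000, 119439360000, 238878720000]

def Z12L : Matrix (Fin 7) (Fin 7) ℤ :=
  !![119439360000, 0, 0, 0, 29859840000, 29859840000, -29859840000;
    0, 119439360000, 0, 0, 149299200000, -89579520000, -149299200000;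
    0, 0, -119439360000, 0, 0, 0, 0;
    0, 0, 0, -119439360000, 0, 0, 0;
    0, 0, -59719680000, -179159040000, 0, 0, 0;
    0, 0, 119439360000, -597196800000, 0, 0, 0;
    0, 0, 59719680000, 179159040000, 0, 0, 0]

def Z13L : Matrix (Fin 7) (Fin 7) ℤ :=
  !![14332723200000, 42998169600000, 0, 0, 42998169600000, -14332723200000, -14332723200000;
    71663616000000, -14332723200000, 0, 0, -14332723200000, 14332723200000, -14332723200000;
    -114661785600000, 0, 14332723200000, 42998169600000, -14332723200000, -14332723200000, 42998169600000;
    0, -114661785600000, 71663616000000, -14332723200000, -128994508800000, 71663616000000, 100329062400000;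
    -28665446400000, -85996339200000, 28665446400000, -28665446400000, -85996339200000, 42998169600000, 57330892800000;
    57330892800000, -401316249600000, 171992678400000, -57330892800000, -429981696000000, 229323571200000, 257989017600000;
    85996339200000, 143327232000000, -85996339200000, -28665446400000, 171992678400000, -71663616000000, -143327232000000]

def Z14L : Matrix (Fin 7) (Fin 7) ℤ :=
  !![0, 0, 0, 0, 0, 0, 0;
    0, 0, 0, 0, 0, 0, 0;
    0, 0, 0, 0, -42998169600000, 14332723200000, 14332723200000;
    0, 0, 0, 0, 14332723200000, -14332723200000, 14332723200000;
    28665446400000, -28665446400000, 0, 0, 0, 0, 0;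
    171992678400000, -57330892800000, 0, 0, 0, 0, 0;
    -85996339200000, -28665446400000, 0, 0, 0, 0, 0]

def TmZ : Matrix (Fin 14) (Fin 14) ℤ :=
  !![0, 0, 0, 0, 0, 0, 0, 0, 0, -1, 0, 0, 0, 0;
    0, 0, 1, 0, 0, 0, 0, 0, 0, 0, 0, 0, 0, 0;
    1, 0, 0, 0, 0, 0, 0, 1, 0, 0, 0, 0, 0, 0;
    0, 0, 0, 0, 0, 0, 0, 0, 0, 0, -240, 240, 480, -240;
    0, 0, 0, 0, 0, 240, 0, 0, -480, 0, 0, 0, 0, 0;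
    0, 0, 0, 0, 0, 115200, 0, -230400, -230400, 0, -115200, 115200, 230400, -115200;
    0, 0, 0, 0, 0, 55296000, 0, -110592000, -110592000, 0, 0, 27648000, 110592000, 110592000;
    0, 0, 0, 55296000, -27648000, -55296000, 0, -110592000, -221184000, 0, 0, 0, 0, 0;
    -115200, -115200, -230400, -57600, 0, 57600, -115200, 115200, 230400, 0, 0, 0, -115200, 230400;
    -221184000, -82944000, 82944000, -103680000, 34560000, 158976000, 0, -193536000, -131328000, 0, -110592000, 82944000, 110592000, -55296000;
    0, -119439360000, 119439360000, -149299200000, 89579520000, 149299200000, -119439360000, 0, -29859840000, 119439360000, 29859840000, 29859840000, -29859840000, 149299200000;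
    119439360000, 0, 0, 29859840000, 29859840000, -29859840000, 0, 119439360000, 149299200000, 0, 0, 0, 0, 0;
    14332723200000, 42998169600000, 0, 42998169600000, -14332723200000, -14332723200000, 71663616000000, -14332723200000, -14332723200000, -114661785600000, -14332723200000, -14332723200000, 42998169600000, -128994508800000;
    0, 0, 0, 0, 0, 0, 0, 0, 0, 0, -42998169600000, 14332723200000, 14332723200000, 14332723200000]

def TpL : Matrix (Fin 14) (Fin 14) ℤ :=
  !![0, 0, 1719926784000000, -3583180800000, -3583180800000, 7464960000, 0, 0, 0, 0, 0, 0, 0, 0;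
    2407897497600000, -1375941427200000, -2866544640000000, 1433272320000, 5971968000000, 1492992000, -4147200, -20736000, -11943936000, -12441600, -2880, -7680, -24, 26;
    0, 1719926784000000, 0, 0, 0, 0, 0, 0, 0, 0, 0, 0, 0, 0;
    -687970713600000, 2063912140800000, -2293235712000000, 477757440000, 6210846720000, 1990656000, 0, 8294400, 5971968000, 0, -5760, 24960, 0, -12;
    1375941427200000, -4127824281600000, -4586471424000000, 3822059520000, 6688604160000, -13934592000, 0, 4147200, -11943936000, 0, 11520, 26880, 0, 24;
    -458647142400000, 1375941427200000, 0, -2866544640000, 3344302080000, 7962624000, 0, -8294400, 3981312000, 0, -3840, 3840, 0, -8;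
    1719926784000000, -2063912140800000, 4586471424000000, -8121876480000, -3105423360000, -5474304000, 12441600, -4147200, -11943936000, 37324800, -31680, 24960, -48, -42;
    0, 0, 0, 3583180800000, 3583180800000, -7464960000, 0, 0, 0, 0, 0, 0, 0, 0;
    -229323571200000, 687970713600000, 0, -1433272320000, -1911029760000, 3981312000, 0, -4147200, 1990656000, 0, -1920, 1920, 0, -4;
    -1719926784000000, 0, 0, 0, 0, 0, 0, 0, 0, 0, 0, 0, 0, 0;
    2235904819200000, -515978035200000, 1146617856000000, -1074954240000, 477757440000, 0, 4147200, -4147200, -5971968000, 12441600, -15840, 12000, -36, -65;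
    8943619276800000, -2063912140800000, 4586471424000000, -9077391360000, 1911029760000, 9953280000, -4147200, -16588800, -23887872000, 49766400, -63360, 48000, -144, -100;
    -2981206425600000, 687970713600000, -1528823808000000, 7007109120000, -637009920000, -6635520000, 8294400, 5529600, 7962624000, -16588800, 21120, -16000, 48, 20;
    745301606400000, -171992678400000, 382205952000000, -1154580480000, 159252480000, -3317760000, 8294400, -1382400, -1990656000, 4147200, -5280, 4000, -12, 5]

def Tm : Matrix (Fin 14) (Fin 14) ℚ := fQ14 TmZ

def posv : Fin 14 → Fin 7 × Fin 7 := ![(0,0), (0,1), (0,2), (0,4), (0,5), (0,6), (1,0), (1,1), (1,4), (2,0), (2,4), (2,5), (2,6), (3,4)]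

def Lmap : Matrix (Fin 7) (Fin 7) ℚ →ₗ[ℚ] (Fin 14 → ℚ) where
  toFun A := fun k => A (posv k).1 (posv k).2
  map_add' _ _ := rfl
  map_smul' _ _ := rfl

def zv : Fin 14 → Matrix (Fin 7) (Fin 7) ℤ :=
  ![ZmL, ZpL, Z1L, Z4L, Z5L, Z6L, Z7L, Z8L, Z9L, Z10L, Z11L, Z12L, Z13L, Z14L]

def wv : Fin 14 → Matrix (Fin 7) (Fin 7) ℚ := fun k => fQ (zv k)

def uu : Fin 14 → ℚˣ := ![Units.mk0 (1 : ℚ) (by norm_num), Units.mk0 (1 : ℚ) (by norm_num), Units.mk0 (1 : ℚ) (by norm_num), Units.mk0 ((1/180 : ℚ) ^ 1) (by norm_num), Units.mk0 ((1/180 : ℚ) ^ 1) (by norm_num), Units.mk0 ((1/180 : ℚ) ^ 2) (by norm_num), Units.mk0 ((1/180 : ℚ) ^ 3) (by norm_num), Units.mk0 ((1/180 : ℚ) ^ 3) (by norm_num), Units.mk0 ((1/180 : ℚ) ^ 2) (by norm_num), Units.mk0 ((1/180 : ℚ) ^ 3) (by norm_num), Units.mk0 ((1/180 : ℚ) ^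 4) (by norm_num), Units.mk0 ((1/180 : ℚ) ^ 4) (by norm_num), Units.mk0 ((1/180 : ℚ) ^ 5) (by norm_num), Units.mk0 ((1/180 : ℚ) ^ 5) (by norm_num)]

lemma mapBr (A B : Matrix (Fin 7) (Fin 7) ℤ) :
    fQ (A * B - B * A) = fQ A * fQ B - fQ B * fQ A := by
  rw [map_sub, map_mul, map_mul]

lemma key (a b : ℚ) {A B C : Matrix (Fin 7) (Fin 7) ℤ} (h : A * B - B * A = C) :
    ⁅a • fQ A, b • fQ B⁆ = (a * b) • fQ C := by
  rw [← h, mapBr, Ring.lie_def, smul_mul_assoc, mul_smul_comm, smul_mul_assoc, mul_smul_comm,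
    smul_smul, smul_smul, mul_comm b a, ← smul_sub]

lemma hNm0 : Nminus = fQ ZmL := by
  ext i j
  fin_cases i <;> fin_cases j <;>
    norm_num [Nminus, Mminus, ZmL, fQ, Matrix.one_apply, RingHom.mapMatrix_apply,
      Matrix.map_apply, Fin.ext_iff]

lemma hNp0 : Nplus = fQ ZpL := by
  ext i j
  fin_cases i <;> fin_cases j <;>
    norm_num [Nplus, Mplus, ZpL, fQ, Matrix.one_apply, RingHom.mapMatrix_apply,
      Matrix.map_apply, Fin.ext_iff]

lemma hMi : Minfty = fQ MiL := by
  ext i j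
  fin_cases i <;> fin_cases j <;>
    norm_num [Minfty, MiL, fQ, RingHom.mapMatrix_apply, Matrix.map_apply]

lemma hNm : Nminus = (1 : ℚ) • fQ ZmL := by rw [one_smul]; exact hNm0

lemma hNp : Nplus = (1 : ℚ) • fQ ZpL := by rw [one_smul]; exact hNp0

lemma hU1 : MiL ^ 3 - 1 = U1L := by decide
lemma hU2 : U1L ^ 2 = U2L := by decide
lemma hU3 : U1L ^ 3 = U3L := by decide
lemma hU4 : U1L ^ 4 = U4L := by decide
lemma hU5 : U1L ^ 5 = U5L := by decide
lemma hU6 : U1L ^ 6 = U6L := by decide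

lemma hWz : (60:ℤ) • U1L - (30:ℤ) • U2L + (20:ℤ) • U3L - (15:ℤ) • U4L + (12:ℤ) • U5L
    - (10:ℤ) • U6L = WL := by decide

lemma hU1Q : Minfty ^ 3 - 1 = fQ U1L := by
  rw [← hU1, map_sub, map_pow, map_one, hMi]

lemma hNi : Ninfty = (1/180 : ℚ) • fQ WL := by
  unfold Ninfty
  rw [show (Finset.Icc (1:ℕ) 6) = {1,2,3,4,5,6} by decide]
  rw [Finset.sum_insert (by decide), Finset.sum_insert (by decide),
    Finset.sum_insert (by decide), Finset.sum_insert (by decide),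
    Finset.sum_insert (by decide), Finset.sum_singleton]
  rw [hU1Q]
  simp only [← map_pow]
  rw [pow_one, hU2, hU3, hU4, hU5, hU6, ← hWz]
  simp only [map_sub, map_add, map_zsmul]
  module

lemma hY1 : Y1 = (1 : ℚ) • fQ Z1L := by
  unfold Y1; rw [hNm, hNp, key _ _ (by decide : ZmL * ZpL - ZpL * ZmL = Z1L)]; module
lemma hY2 : Y2 = ((1/180 : ℚ) ^ 1) • fQ Z2L := by
  unfold Y2; rw [hNm, hNi, key _ _ (by decide : ZmL * WL - WL * ZmL = Z2L)]; module
lemma hY3 : Y3 = ((1/180 : ℚ) ^ 1) • fQ Z3L := by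
  unfold Y3; rw [hNp, hNi, key _ _ (by decide : ZpL * WL - WL * ZpL = Z3L)]; module
lemma hY4 : Y4 = ((1/180 : ℚ) ^ 1) • fQ Z4L := by
  unfold Y4; rw [hY1, hY2, key _ _ (by decide : Z1L * Z2L - Z2L * Z1L = Z4L)]; module
lemma hY5 : Y5 = ((1/180 : ℚ) ^ 1) • fQ Z5L := by
  unfold Y5; rw [hY1, hY3, key _ _ (by decide : Z1L * Z3L - Z3L * Z1L = Z5L)]; module
lemma hY6 : Y6 = ((1/180 : ℚ) ^ 2) • fQ Z6L := by
  unfold Y6; rw [hY2, hY3, key _ _ (by decide : Z2L * Z3L - Z3L * Z2L = Z6L)]; module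
lemma hY7 : Y7 = ((1/180 : ℚ) ^ 3) • fQ Z7L := by
  unfold Y7; rw [hY2, hY6, key _ _ (by decide : Z2L * Z6L - Z6L * Z2L = Z7L)]; module
lemma hY8 : Y8 = ((1/180 : ℚ) ^ 3) • fQ Z8L := by
  unfold Y8; rw [hY5, hY6, key _ _ (by decide : Z5L * Z6L - Z6L * Z5L = Z8L)]; module
lemma hY9 : Y9 = ((1/180 : ℚ) ^ 2) • fQ Z9L := by
  unfold Y9; rw [hNi, hY5, key _ _ (by decide : WL * Z5L - Z5L * WL = Z9L)]; module
lemma hY10 : Y10 = ((1/180 : ℚ) ^ 3) • fQ Z10L := by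
  unfold Y10; rw [hNi, hY9, key _ _ (by decide : WL * Z9L - Z9L * WL = Z10L)]; module
lemma hY11 : Y11 = ((1/180 : ℚ) ^ 4) • fQ Z11L := by
  unfold Y11; rw [hNi, hY10, key _ _ (by decide : WL * Z10L - Z10L * WL = Z11L)]; module
lemma hY12 : Y12 = ((1/180 : ℚ) ^ 4) • fQ Z12L := by
  unfold Y12; rw [hNp, hY11, key _ _ (by decide : ZpL * Z11L - Z11L * ZpL = Z12L)]; module
lemma hY13 : Y13 = ((1/180 : ℚ) ^ 5) • fQ Z13L := by
  unfold Y13; rw [hNi, hY12, key _ _ (by decide : WL * Z12L - Z12L * WL = Z13L)]; module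
lemma hY14 : Y14 = ((1/180 : ℚ) ^ 5) • fQ Z14L := by
  unfold Y14; rw [hNm, hY13, key _ _ (by decide : ZmL * Z13L - Z13L * ZmL = Z14L)]; module

lemma hZT : TmZ * TpL = (1719926784000000 : ℤ) • 1 := by decide

lemma hTunit : IsUnit Tm := by
  have h : Tm * (((1719926784000000 : ℚ)⁻¹) • fQ14 TpL) = 1 := by
    rw [Matrix.mul_smul, show Tm = fQ14 TmZ from rfl, ← map_mul, hZT, map_zsmul, map_one,
      ← Int.cast_smul_eq_zsmul ℚ, smul_smul]
    norm_num
  have := invertibleOfRightInverse _ _ h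
  exact isUnit_of_invertible Tm

lemma hcomp : (⇑Lmap ∘ wv) = fun i => Tm i := by
  funext k l; fin_cases k <;> fin_cases l <;> rfl

lemma hw : LinearIndependent ℚ wv :=
  LinearIndependent.of_comp Lmap
    (by rw [hcomp]; exact Matrix.linearIndependent_rows_iff_isUnit.mpr hTunit)

theorem stmt13 :
    LinearIndependent ℚ
      ![Nminus, Nplus, Y1, Y4, Y5, Y6, Y7, Y8, Y9, Y10, Y11, Y12, Y13, Y14] := by
  have he : (uu • wv) = ![Nminus, Nplus, Y1, Y4, Y5, Y6, Y7, Y8, Y9, Y10, Y11, Y12, Y13, Y14] := by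
    funext k; fin_cases k
    exacts [hNm.symm, hNp.symm, hY1.symm, hY4.symm, hY5.symm, hY6.symm, hY7.symm, hY8.symm, hY9.symm, hY10.symm, hY11.symm, hY12.symm, hY13.symm, hY14.symm]
  rw [← he]
  exact hw.units_smul uu

end
end
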